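/- Let H : ℝ → ℝ be continuously differentiable, vanishing outside [−θ, θ], equal to 1 on [−θ+δ, θ−δ] where 0 < δ < θ ≤ π/4, with 0 ≤ H ≤ 1 and ‖H'‖_∞ ≤ 2/δ, and define ψ(r cos β, r sin β) = H(β − π/2) for 0 ≤ r ≤ cos θ and ψ = 0 for r > cos θ. Then ψ ≤ 1_{S(cos θ, θ)} pointwise, where S(cos θ, θ) is the sector of radius cos θ and angular half-width θ about the positive y-axis, and ∫_{ℝ²} (1_{S(cos θ, θ)} − ψ) dx ≤ 2δ. -/

import Mathlib

open Real MeasureTheory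

/-- The sector of radius `r₀` and angular half-width `φ₀` around the positive y-axis. -/
def sector (r₀ φ₀ : ℝ) : Set (ℝ × ℝ) :=
  {p | ∃ r β : ℝ, 0 ≤ r ∧ r ≤ r₀ ∧ |β - π/2| ≤ φ₀ ∧ p = (r * Real.cos β, r * Real.sin β)}

/-!
In polar coordinates `(r, β)` the integrand `1_S - ψ` becomes
`r · 1_{(0, r₀]}(r) · 1_{|β - π/2| ≤ θ} (1 - H (β - π/2))`, a product of a radial and an angular
factor. The radial factor integrates to `r₀² / 2`, and the angular one is dominated by the
indicator of the two bands of width `δ` at the edges of the sector, where `H` may differ from `1`;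
this comparison (`integral_mono_of_nonneg`) needs `0 ≤ 1 - H` but not the integrability of `1 - H`.
-/

open Set

lemma setIntegral_indicator_Icc_one_sub_le {G : ℝ → ℝ} {a b δ : ℝ} (hδ : 0 ≤ δ)
    (hG : ∀ s, 0 ≤ G s ∧ G s ≤ 1) (hone : ∀ s, a + δ ≤ s → s ≤ b - δ → G s = 1) (t : Set ℝ) :
    ∫ s in t, (Icc a b).indicator (fun s => 1 - G s) s ≤ 2 * δ := by
  set E := Icc a (a + δ) ∪ Icc (b - δ) b
  have hE : MeasurableSet E := measurableSet_Icc.union measurableSet_Icc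
  have hnonneg : 0 ≤ (Icc a b).indicator (fun s => 1 - G s) :=
    indicator_nonneg fun s _ => sub_nonneg.2 (hG s).2
  have hle : (Icc a b).indicator (fun s => 1 - G s) ≤ E.indicator 1 := by
    intro s
    by_cases hsE : s ∈ E
    · rw [indicator_of_mem hsE]
      exact indicator_apply_le' (fun _ => sub_le_self 1 (hG s).1) (fun _ => zero_le_one)
    · rw [indicator_of_notMem hsE]
      by_cases hs : s ∈ Icc a b
      · simp only [E, mem_union, mem_Icc, not_or, not_and_or, not_le] at hsE
        simp [hs, hone s (by grind) (by grind)]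
      · simp [hs]
  have hEfin : volume E < ⊤ := measure_union_lt_top measure_Icc_lt_top measure_Icc_lt_top
  have hint : Integrable (E.indicator 1) (volume.restrict t) :=
    (integrableOn_const (C := (1 : ℝ))
      ((Measure.restrict_apply_le t E).trans_lt hEfin).ne).integrable_indicator hE
  calc ∫ s in t, (Icc a b).indicator (fun s => 1 - G s) s
      ≤ ∫ s in t, E.indicator 1 s :=
        integral_mono_of_nonneg (ae_of_all _ hnonneg) hint (ae_of_all _ hle)
    _ = volume.real (E ∩ t) := by rw [integral_indicator_one hE, measureReal_restrict_apply hE]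
    _ ≤ volume.real E := measureReal_mono inter_subset_left hEfin.ne
    _ ≤ volume.real (Icc a (a + δ)) + volume.real (Icc (b - δ) b) := measureReal_union_le _ _
    _ = 2 * δ := by
      rw [Real.volume_real_Icc_of_le (by linarith), Real.volume_real_Icc_of_le (by linarith)]
      ring

noncomputable def sectorCutoff (r₀ : ℝ) (H : ℝ → ℝ) (p : ℝ × ℝ) : ℝ :=
  if √(p.1 ^ 2 + p.2 ^ 2) ≤ r₀ then H (Complex.arg ((p.1 : ℂ) + (p.2 : ℂ) * Complex.I) - π / 2)
  else 0

lemma sqrt_sq_mul_cos_add_sq_mul_sin {r : ℝ} (hr : 0 ≤ r) (β : ℝ) :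
    √((r * cos β) ^ 2 + (r * sin β) ^ 2) = r := by
  rw [show (r * cos β) ^ 2 + (r * sin β) ^ 2 = r ^ 2 by
    linear_combination r ^ 2 * sin_sq_add_cos_sq β, sqrt_sq hr]

lemma arg_mul_cos_add_mul_sin_mul_I {r β : ℝ} (hr : 0 < r) (hβ : β ∈ Ioc (-π) π) :
    Complex.arg (((r * cos β : ℝ) : ℂ) + ((r * sin β : ℝ) : ℂ) * Complex.I) = β := by
  convert Complex.arg_mul_cos_add_sin_mul_I hr hβ using 2
  push_cast
  ring

lemma eq_sqrt_mul_cos_arg (p : ℝ × ℝ) :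
    p = (√(p.1 ^ 2 + p.2 ^ 2) * cos (Complex.arg ((p.1 : ℂ) + (p.2 : ℂ) * Complex.I)),
      √(p.1 ^ 2 + p.2 ^ 2) * sin (Complex.arg ((p.1 : ℂ) + (p.2 : ℂ) * Complex.I))) := by
  rw [← Complex.norm_add_mul_I, Complex.norm_mul_cos_arg, Complex.norm_mul_sin_arg]
  simp

lemma mem_sector_of_sqrt_le_of_abs_arg_sub_le {r₀ φ₀ : ℝ} {p : ℝ × ℝ}
    (hr : √(p.1 ^ 2 + p.2 ^ 2) ≤ r₀)
    (hβ : |Complex.arg ((p.1 : ℂ) + (p.2 : ℂ) * Complex.I) - π / 2| ≤ φ₀) :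
    p ∈ sector r₀ φ₀ :=
  ⟨_, _, sqrt_nonneg _, hr, hβ, eq_sqrt_mul_cos_arg p⟩

lemma mk_mem_sector_iff {r₀ φ₀ r β : ℝ} (hφ₀ : φ₀ ≤ π / 2) (hr : 0 < r) (hβ : β ∈ Ioc (-π) π) :
    (r * cos β, r * sin β) ∈ sector r₀ φ₀ ↔ r ≤ r₀ ∧ |β - π / 2| ≤ φ₀ := by
  refine ⟨?_, fun ⟨hr₀, hβφ₀⟩ => ⟨r, β, hr.le, hr₀, hβφ₀, rfl⟩⟩
  rintro ⟨r', β', hr', hr'₀, hβ'φ₀, hp⟩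
  obtain ⟨h₁, h₂⟩ := Prod.mk.inj hp
  have hrr' : r = r' := by
    rw [← sqrt_sq_mul_cos_add_sq_mul_sin hr.le β, h₁, h₂, sqrt_sq_mul_cos_add_sq_mul_sin hr']
  subst hrr'
  have hβ' : β' ∈ Ioc (-π) π := by
    rw [abs_le] at hβ'φ₀
    constructor <;> linarith [pi_pos]
  have hββ' : β = β' := by
    rw [← arg_mul_cos_add_mul_sin_mul_I hr hβ, h₁, h₂, arg_mul_cos_add_mul_sin_mul_I hr hβ']
  exact hββ' ▸ ⟨hr'₀, hβ'φ₀⟩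

lemma sectorCutoff_mk {r₀ r β : ℝ} (H : ℝ → ℝ) (hr : 0 < r) (hβ : β ∈ Ioc (-π) π) :
    sectorCutoff r₀ H (r * cos β, r * sin β) = if r ≤ r₀ then H (β - π / 2) else 0 := by
  rw [sectorCutoff, sqrt_sq_mul_cos_add_sq_mul_sin hr.le, arg_mul_cos_add_mul_sin_mul_I hr hβ]

lemma sectorCutoff_le_indicator_sector {r₀ φ₀ : ℝ} {H : ℝ → ℝ}
    (hsupp : ∀ s, (s < -φ₀ ∨ φ₀ < s) → H s = 0) (hle : ∀ s, H s ≤ 1) (p : ℝ × ℝ) :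
    sectorCutoff r₀ H p ≤ (sector r₀ φ₀).indicator (fun _ => 1) p := by
  have hind : 0 ≤ (sector r₀ φ₀).indicator (fun _ => (1 : ℝ)) p :=
    indicator_nonneg (fun _ _ => zero_le_one) p
  unfold sectorCutoff
  split_ifs with hr
  · by_cases hβ : |Complex.arg ((p.1 : ℂ) + (p.2 : ℂ) * Complex.I) - π / 2| ≤ φ₀
    · rw [indicator_of_mem (mem_sector_of_sqrt_le_of_abs_arg_sub_le hr hβ)]
      exact hle _
    · rw [hsupp _ (by rw [abs_le] at hβ; grind)]
      exact hind
  · exact hind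

lemma polarCoord_symm_smul_indicator_sector_sub_sectorCutoff {r₀ φ₀ : ℝ} {H : ℝ → ℝ}
    (hφ₀ : φ₀ ≤ π / 2) (hsupp : ∀ s, (s < -φ₀ ∨ φ₀ < s) → H s = 0) {q : ℝ × ℝ}
    (hq : q ∈ polarCoord.target) :
    q.1 • ((sector r₀ φ₀).indicator (fun _ => 1) (polarCoord.symm q) -
        sectorCutoff r₀ H (polarCoord.symm q)) =
      (Ioc 0 r₀).indicator id q.1 *
        (Icc (π / 2 - φ₀) (π / 2 + φ₀)).indicator (fun β => 1 - H (β - π / 2)) q.2 := by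
  obtain ⟨r, β⟩ := q
  obtain ⟨hr, hβ⟩ : 0 < r ∧ β ∈ Ioo (-π) π := hq
  have hβ' : β ∈ Ioc (-π) π := Ioo_subset_Ioc_self hβ
  have hIcc : β ∈ Icc (π / 2 - φ₀) (π / 2 + φ₀) ↔ |β - π / 2| ≤ φ₀ := by
    rw [abs_sub_comm, mem_Icc_iff_abs_le]
  rw [polarCoord_symm_apply]
  simp only [indicator, mk_mem_sector_iff hφ₀ hr hβ', sectorCutoff_mk H hr hβ', hIcc,
    mem_Ioc, hr, true_and, id, smul_eq_mul]
  by_cases hβφ₀ : |β - π / 2| ≤ φ₀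
  · by_cases hr₀ : r ≤ r₀ <;> simp [hr₀, hβφ₀]
  · have hH : H (β - π / 2) = 0 := hsupp _ (by rw [abs_le] at hβφ₀; grind)
    simp [hβφ₀, hH]

lemma setIntegral_Ioi_indicator_Ioc_id {r₀ : ℝ} (hr₀ : 0 ≤ r₀) :
    ∫ r in Ioi 0, (Ioc 0 r₀).indicator id r = r₀ ^ 2 / 2 := by
  rw [setIntegral_indicator measurableSet_Ioc, inter_eq_right.mpr Ioc_subset_Ioi_self,
    ← intervalIntegral.integral_of_le hr₀]
  simp [integral_id]

lemma integral_indicator_sector_sub_sectorCutoff_le {r₀ φ₀ δ : ℝ} {H : ℝ → ℝ} (hr₀ : 0 ≤ r₀)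
    (hφ₀ : φ₀ ≤ π / 2) (hδ : 0 ≤ δ) (hsupp : ∀ s, (s < -φ₀ ∨ φ₀ < s) → H s = 0)
    (hone : ∀ s, -φ₀ + δ ≤ s → s ≤ φ₀ - δ → H s = 1) (hH : ∀ s, 0 ≤ H s ∧ H s ≤ 1) :
    ∫ p, ((sector r₀ φ₀).indicator (fun _ => 1) p - sectorCutoff r₀ H p) ≤ r₀ ^ 2 * δ := by
  rw [← integral_comp_polarCoord_symm, setIntegral_congr_fun polarCoord.open_target.measurableSet
    fun q hq => polarCoord_symm_smul_indicator_sector_sub_sectorCutoff hφ₀ hsupp hq]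
  rw [show polarCoord.target = Ioi 0 ×ˢ Ioo (-π) π from rfl, Measure.volume_eq_prod,
    setIntegral_prod_mul, setIntegral_Ioi_indicator_Ioc_id hr₀]
  have hangular := setIntegral_indicator_Icc_one_sub_le (G := fun β => H (β - π / 2))
    (a := π / 2 - φ₀) (b := π / 2 + φ₀) hδ
    (fun _ => hH _) (fun _ h₁ h₂ => hone _ (by linarith) (by linarith)) (Ioo (-π) π)
  calc r₀ ^ 2 / 2 * _ ≤ r₀ ^ 2 / 2 * (2 * δ) := by gcongr
    _ = r₀ ^ 2 * δ := by ring

theorem stmt16_general (θ δ : ℝ) (h0 : 0 < δ) (h1 : δ < θ) (h2 : θ ≤ π/4)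
    (H : ℝ → ℝ)
    (hHsupp : ∀ s, (s < -θ ∨ θ < s) → H s = 0)
    (hHone : ∀ s, -θ+δ ≤ s → s ≤ θ-δ → H s = 1)
    (hH01 : ∀ s, 0 ≤ H s ∧ H s ≤ 1)
    (ψ : ℝ × ℝ → ℝ)
    (hψ : ∀ p : ℝ × ℝ, ψ p =
      if Real.sqrt (p.1^2 + p.2^2) ≤ Real.cos θ then
        H ((Complex.arg ((p.1 : ℂ) + (p.2 : ℂ) * Complex.I)) - π/2)
      else 0) :
    (∀ p, ψ p ≤ Set.indicator (sector (Real.cos θ) θ) (fun _ => (1:ℝ)) p) ∧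
    ∫ p : ℝ × ℝ, (Set.indicator (sector (Real.cos θ) θ) (fun _ => (1:ℝ)) p - ψ p) ≤ 2*δ := by
  obtain rfl : ψ = sectorCutoff (cos θ) H := funext hψ
  have hθ : θ ≤ π / 2 := by linarith [pi_pos]
  have hcos : 0 ≤ cos θ := cos_nonneg_of_mem_Icc ⟨by linarith, hθ⟩
  refine ⟨sectorCutoff_le_indicator_sector hHsupp fun s => (hH01 s).2, ?_⟩
  calc _ ≤ cos θ ^ 2 * δ :=
        integral_indicator_sector_sub_sectorCutoff_le hcos hθ h0.le hHsupp hHone hH01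
    _ ≤ 1 * δ := by gcongr; exact pow_le_one₀ hcos (cos_le_one θ)
    _ ≤ 2 * δ := by linarith

theorem stmt16 (θ δ : ℝ) (h0 : 0 < δ) (h1 : δ < θ) (h2 : θ ≤ π/4)
    (H : ℝ → ℝ) (hH1 : ContDiff ℝ 1 H)
    (hHsupp : ∀ s, (s < -θ ∨ θ < s) → H s = 0)
    (hHone : ∀ s, -θ+δ ≤ s → s ≤ θ-δ → H s = 1)
    (hH01 : ∀ s, 0 ≤ H s ∧ H s ≤ 1)
    (hH' : ∀ s, |deriv H s| ≤ 2/δ)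
    (ψ : ℝ × ℝ → ℝ)
    (hψ : ∀ p : ℝ × ℝ, ψ p =
      if Real.sqrt (p.1^2 + p.2^2) ≤ Real.cos θ then
        H ((Complex.arg ((p.1 : ℂ) + (p.2 : ℂ) * Complex.I)) - π/2)
      else 0) :
    (∀ p, ψ p ≤ Set.indicator (sector (Real.cos θ) θ) (fun _ => (1:ℝ)) p) ∧
    ∫ p : ℝ × ℝ, (Set.indicator (sector (Real.cos θ) θ) (fun _ => (1:ℝ)) p - ψ p) ≤ 2*δ :=
  stmt16_general θ δ h0 h1 h2 H hHsupp hHone hH01 ψ hψ
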